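/- The map f : ℝ³ → ℝ⁴ defined by f(x,y,z) = cosh(z)•(xy+1, x+y/2, xy, x-y/2) - sinh(z)•(xy, x-y/2, xy+1, x+y/2) is an immersion, i.e., its differential has rank 3 at every point of ℝ³. -/

import Mathlib

/-!
The map has a smooth left inverse: `f₀ - f₂ = eᶻ`, `f₁ + f₃ = 2x e⁻ᶻ` and `f₁ - f₃ = y eᶻ`, so
`(x, y, z)` is a smooth function of `f(x, y, z)` on the half-space `f₀ > f₂`. By the chain rule
the differential of this left inverse is a left inverse of the differential of `f`.
-/

/-- The example hypersurface `f(x,y,z) = cosh z • (xy+1, x+y/2, xy, x-y/2)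
- sinh z • (xy, x-y/2, xy+1, x+y/2)`. -/
noncomputable def exF : ℝ × ℝ × ℝ → (Fin 4 → ℝ) := fun p =>
  Real.cosh p.2.2 • (![p.1 * p.2.1 + 1, p.1 + p.2.1 / 2, p.1 * p.2.1, p.1 - p.2.1 / 2])
    - Real.sinh p.2.2 • (![p.1 * p.2.1, p.1 - p.2.1 / 2, p.1 * p.2.1 + 1, p.1 + p.2.1 / 2])

open Function Real

theorem HasFDerivAt.injective_of_leftInverse {𝕜 E F : Type*} [NontriviallyNormedField 𝕜]
    [NormedAddCommGroup E] [NormedSpace 𝕜 E] [NormedAddCommGroup F] [NormedSpace 𝕜 F]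
    {f : E → F} {g : F → E} {D : E →L[𝕜] F} {p : E} (hf : HasFDerivAt f D p)
    (hg : DifferentiableAt 𝕜 g (f p)) (hgf : LeftInverse g f) : Injective D := by
  have hid : (fderiv 𝕜 g (f p)).comp D = ContinuousLinearMap.id 𝕜 E := by
    refine (hg.hasFDerivAt.comp p hf).unique ?_
    simpa [hgf.comp_eq_id] using hasFDerivAt_id p
  exact LeftInverse.injective fun v => congrArg (· v) hid

theorem differentiable_exF : Differentiable ℝ exF := by
  rw [differentiable_pi]
  intro i
  fin_cases i <;>
    simp only [exF, Pi.sub_apply, Pi.smul_apply, smul_eq_mul, Fin.reduceFinMk, Fin.zero_eta,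
      Fin.mk_one, Matrix.cons_val] <;>
    fun_prop

theorem exF_zero_sub_exF_two (p : ℝ × ℝ × ℝ) : exF p 0 - exF p 2 = exp p.2.2 := by
  simp [exF, ← cosh_add_sinh]; ring

theorem exF_one_add_exF_three (p : ℝ × ℝ × ℝ) :
    exF p 1 + exF p 3 = 2 * p.1 * exp (-p.2.2) := by
  simp [exF, ← cosh_sub_sinh]; ring

theorem exF_one_sub_exF_three (p : ℝ × ℝ × ℝ) : exF p 1 - exF p 3 = p.2.1 * exp p.2.2 := by
  simp [exF, ← cosh_add_sinh]; ring

noncomputable def exFLeftInv (q : Fin 4 → ℝ) : ℝ × ℝ × ℝ :=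
  let z := log (q 0 - q 2)
  (exp z * (q 1 + q 3) / 2, exp (-z) * (q 1 - q 3), z)

theorem leftInverse_exFLeftInv_exF : LeftInverse exFLeftInv exF := by
  rintro ⟨x, y, z⟩
  simp only [exFLeftInv, exF_zero_sub_exF_two, exF_one_add_exF_three, exF_one_sub_exF_three,
    log_exp, exp_neg]
  refine Prod.ext ?_ (Prod.ext ?_ rfl) <;> field_simp

theorem differentiableAt_exFLeftInv {q : Fin 4 → ℝ} (hq : q 0 - q 2 ≠ 0) :
    DifferentiableAt ℝ exFLeftInv q := by
  unfold exFLeftInv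
  fun_prop (disch := exact hq)

/-- `exF` is an immersion: its differential has rank 3 (is injective)
at every point of `ℝ³`. -/
theorem stmt10 (p : ℝ × ℝ × ℝ) :
    ∃ D : (ℝ × ℝ × ℝ) →L[ℝ] (Fin 4 → ℝ), HasFDerivAt exF D p ∧ Function.Injective D := by
  have hf := (differentiable_exF p).hasFDerivAt
  have hg : DifferentiableAt ℝ exFLeftInv (exF p) :=
    differentiableAt_exFLeftInv (by rw [exF_zero_sub_exF_two]; exact (exp_pos _).ne')
  exact ⟨_, hf, hf.injective_of_leftInverse hg leftInverse_exFLeftInv_exF⟩
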